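/- O_f is the tightest octagon containing S, in the following sense: for all signs s, s' ∈ {−1, +1}, all coordinates α, β ∈ {1,…,m+n}, and every real constant c, if every point p of S satisfies s·p_α + s'·p_β ≤ c, then every point q of O_f satisfies s·q_α + s'·q_β ≤ c. -/

import Mathlib

/-!
Every constraint of `O_f` bounds a functional `ℓ = s·p_α + s'·p_β`. On the graph `S`, `ℓ` is an
affine function `κ + ⟪c, x⟫` of `x ∈ K`, whose maximum is `κ + h_K(c)`, with `h_K` the support
function of the box `K`, attained at a vertex of `K`. Each bound defining `O_f` is exactly this
maximum (`δ` and `γ` account for the coordinate where `c` differs from `±w_i` by `±1`), so every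
point of `O_f` satisfies `ℓ ≤ max_S ℓ`, hence every inequality valid on `S`.
-/

open Finset

def intervalSupport (l u t : ℝ) : ℝ := max (t * l) (t * u)

section IntervalSupport

variable {l u : ℝ}

theorem intervalSupport_of_nonneg (h : l ≤ u) {t : ℝ} (ht : 0 ≤ t) :
    intervalSupport l u t = t * u :=
  max_eq_right (mul_le_mul_of_nonneg_left h ht)

theorem intervalSupport_of_nonpos (h : l ≤ u) {t : ℝ} (ht : t ≤ 0) :
    intervalSupport l u t = t * l :=
  max_eq_left (mul_le_mul_of_nonpos_left h ht)

theorem mul_ite_neg_eq_intervalSupport (h : l ≤ u) (t : ℝ) :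
    t * (if t < 0 then l else u) = intervalSupport l u t := by
  split_ifs with ht
  · rw [intervalSupport_of_nonpos h ht.le]
  · rw [intervalSupport_of_nonneg h (not_lt.1 ht)]

theorem mul_ite_neg_eq_neg_intervalSupport_neg (h : l ≤ u) (t : ℝ) :
    t * (if t < 0 then u else l) = -intervalSupport l u (-t) := by
  split_ifs with ht
  · rw [intervalSupport_of_nonneg h (neg_nonneg.2 ht.le)]; ring
  · rw [intervalSupport_of_nonpos h (neg_nonpos.2 (not_lt.1 ht))]; ring

theorem mul_le_intervalSupport {x : ℝ} (hx : l ≤ x ∧ x ≤ u) (t : ℝ) :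
    t * x ≤ intervalSupport l u t := by
  rcases le_total 0 t with ht | ht
  · exact (mul_le_mul_of_nonneg_left hx.2 ht).trans (le_max_right _ _)
  · exact (mul_le_mul_of_nonpos_left hx.1 ht).trans (le_max_left _ _)

end IntervalSupport

section BoxSupport

variable {m : ℕ} {xl xu : Fin m → ℝ}

def boxSupport (xl xu c : Fin m → ℝ) : ℝ := ∑ k, intervalSupport (xl k) (xu k) (c k)

noncomputable def boxVertex (xl xu c : Fin m → ℝ) : Fin m → ℝ :=
  fun k => if c k < 0 then xl k else xu k

theorem boxVertex_mem (h : ∀ k, xl k ≤ xu k) (c : Fin m → ℝ) (k : Fin m) :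
    xl k ≤ boxVertex xl xu c k ∧ boxVertex xl xu c k ≤ xu k := by
  unfold boxVertex
  split_ifs
  · exact ⟨le_rfl, h k⟩
  · exact ⟨h k, le_rfl⟩

theorem sum_mul_boxVertex (h : ∀ k, xl k ≤ xu k) (c : Fin m → ℝ) :
    ∑ k, c k * boxVertex xl xu c k = boxSupport xl xu c :=
  sum_congr rfl fun k _ => mul_ite_neg_eq_intervalSupport (h k) (c k)

theorem sum_mul_ite_neg_eq_neg_boxSupport_neg (h : ∀ k, xl k ≤ xu k) (c : Fin m → ℝ) :
    ∑ k, c k * (if c k < 0 then xu k else xl k) = -boxSupport xl xu (-c) := by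
  rw [boxSupport, ← sum_neg_distrib]
  exact sum_congr rfl fun k _ => mul_ite_neg_eq_neg_intervalSupport_neg (h k) (c k)

theorem sum_mul_le_boxSupport {x : Fin m → ℝ} (hx : ∀ k, xl k ≤ x k ∧ x k ≤ xu k)
    (c : Fin m → ℝ) : ∑ k, c k * x k ≤ boxSupport xl xu c :=
  sum_le_sum fun k _ => mul_le_intervalSupport (hx k) (c k)

theorem boxSupport_add_single (c : Fin m → ℝ) (j : Fin m) (t : ℝ) :
    boxSupport xl xu (c + Pi.single j t) = boxSupport xl xu c +
      (intervalSupport (xl j) (xu j) (c j + t) - intervalSupport (xl j) (xu j) (c j)) := by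
  have hdiff : ∑ k, (intervalSupport (xl k) (xu k) (c k + (Pi.single j t : Fin m → ℝ) k) -
      intervalSupport (xl k) (xu k) (c k)) =
      intervalSupport (xl j) (xu j) (c j + t) - intervalSupport (xl j) (xu j) (c j) := by
    rw [sum_eq_single j (fun k _ hk => by simp [hk]) (by simp)]
    simp
  rw [sum_sub_distrib] at hdiff
  simp only [boxSupport, Pi.add_apply]
  linarith

end BoxSupport

namespace Octagon

/- The paper's `γ_{i,j}` and `δ_{i,j}` are `gamma x̲_j x̄_j w_{i,j}` and `delta x̲_j x̄_j w_{i,j}`. -/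

noncomputable def gamma (l u a : ℝ) : ℝ :=
  if 0 ≤ a then 0 else if -1 ≤ a then -a * (u - l) else u - l

noncomputable def delta (l u a : ℝ) : ℝ :=
  if a ≤ 0 then 0 else if a ≤ 1 then a * (u - l) else u - l

theorem gamma_neg (l u a : ℝ) : gamma l u (-a) = delta l u a := by
  simp only [gamma, delta, neg_nonneg, neg_le_neg_iff, neg_neg]

theorem delta_neg (l u a : ℝ) : delta l u (-a) = gamma l u a := by
  rw [← gamma_neg, neg_neg]

variable {l u : ℝ}

theorem intervalSupport_add_one (h : l ≤ u) (a : ℝ) :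
    intervalSupport l u (a + 1) = intervalSupport l u a + u - gamma l u a := by
  unfold gamma
  split_ifs with h₀ h₁
  · rw [intervalSupport_of_nonneg h (t := a + 1) (by linarith), intervalSupport_of_nonneg h h₀]
    ring
  · rw [intervalSupport_of_nonneg h (t := a + 1) (by linarith),
      intervalSupport_of_nonpos h (not_le.1 h₀).le]
    ring
  · rw [intervalSupport_of_nonpos h (t := a + 1) (by linarith),
      intervalSupport_of_nonpos h (not_le.1 h₀).le]
    ring

theorem intervalSupport_sub_one (h : l ≤ u) (a : ℝ) :
    intervalSupport l u (a - 1) = intervalSupport l u a - l - delta l u a := by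
  unfold delta
  split_ifs with h₀ h₁
  · rw [intervalSupport_of_nonpos h (t := a - 1) (by linarith), intervalSupport_of_nonpos h h₀]
    ring
  · rw [intervalSupport_of_nonpos h (t := a - 1) (by linarith),
      intervalSupport_of_nonneg h (not_le.1 h₀).le]
    ring
  · rw [intervalSupport_of_nonneg h (t := a - 1) (by linarith [not_le.1 h₁]),
      intervalSupport_of_nonneg h (not_le.1 h₀).le]
    ring

variable {m : ℕ} {xl xu : Fin m → ℝ}

theorem boxSupport_add_single_one (h : ∀ k, xl k ≤ xu k) (c : Fin m → ℝ) (j : Fin m) :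
    boxSupport xl xu (c + Pi.single j 1) =
      boxSupport xl xu c + xu j - gamma (xl j) (xu j) (c j) := by
  rw [boxSupport_add_single, intervalSupport_add_one (h j)]
  ring

theorem boxSupport_add_single_neg_one (h : ∀ k, xl k ≤ xu k) (c : Fin m → ℝ) (j : Fin m) :
    boxSupport xl xu (c + Pi.single j (-1)) =
      boxSupport xl xu c - xl j - delta (xl j) (xu j) (c j) := by
  rw [boxSupport_add_single, ← sub_eq_add_neg, intervalSupport_sub_one (h j)]
  ring

theorem signed_output_add_signed_input_le (h : ∀ k, xl k ≤ xu k) (c : Fin m → ℝ) (j : Fin m)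
    {y x β M M' γ δ : ℝ} (hM : M = β + boxSupport xl xu c)
    (hM' : M' = β - boxSupport xl xu (-c))
    (hγ : γ = gamma (xl j) (xu j) (c j)) (hδ : δ = delta (xl j) (xu j) (c j))
    (hsub : M' - xu j + δ ≤ y - x ∧ y - x ≤ M - xl j - δ)
    (hadd : M' + xl j + γ ≤ y + x ∧ y + x ≤ M + xu j - γ)
    {s s' : ℝ} (hs : s = 1 ∨ s = -1) (hs' : s' = 1 ∨ s' = -1) :
    s * y + s' * x ≤ boxSupport xl xu (s • c + s' • Pi.single j 1) + s * β := by
  subst hM hM' hγ hδ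
  rcases hs with rfl | rfl <;> rcases hs' with rfl | rfl <;>
    simp only [one_smul, neg_one_smul, one_mul, neg_one_mul, ← Pi.single_neg]
  · rw [boxSupport_add_single_one h]; linarith
  · rw [boxSupport_add_single_neg_one h]; linarith
  · rw [boxSupport_add_single_one h, Pi.neg_apply, gamma_neg]; linarith
  · rw [boxSupport_add_single_neg_one h, Pi.neg_apply, delta_neg]; linarith

theorem signed_output_add_signed_output_le {c₁ c₂ : Fin m → ℝ} {y₁ y₂ β₁ β₂ D₁₂ D₂₁ G L : ℝ}
    (hD₁₂ : D₁₂ = β₁ - β₂ + boxSupport xl xu (c₁ - c₂))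
    (hD₂₁ : D₂₁ = β₂ - β₁ + boxSupport xl xu (c₂ - c₁))
    (hG : G = β₁ + β₂ + boxSupport xl xu (c₁ + c₂))
    (hL : L = β₁ + β₂ - boxSupport xl xu (-(c₁ + c₂)))
    (hsub₁₂ : y₁ - y₂ ≤ D₁₂) (hsub₂₁ : y₂ - y₁ ≤ D₂₁) (hadd : L ≤ y₁ + y₂ ∧ y₁ + y₂ ≤ G)
    {s s' : ℝ} (hs : s = 1 ∨ s = -1) (hs' : s' = 1 ∨ s' = -1) :
    s * y₁ + s' * y₂ ≤ boxSupport xl xu (s • c₁ + s' • c₂) + (s * β₁ + s' * β₂) := by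
  subst hD₁₂ hD₂₁ hG hL
  rcases hs with rfl | rfl <;> rcases hs' with rfl | rfl <;>
    simp only [one_smul, neg_one_smul, one_mul, neg_one_mul]
  · linarith
  · rw [← sub_eq_add_neg c₁]; linarith
  · rw [neg_add_eq_sub c₁]; linarith
  · rw [← neg_add c₁]; linarith

section Graph

variable {n : ℕ} (w : Fin n → Fin m → ℝ) (b : Fin n → ℝ)

def graphCoeff : Fin m ⊕ Fin n → Fin m → ℝ := Sum.elim (fun j => Pi.single j 1) w

def graphConst : Fin m ⊕ Fin n → ℝ := Sum.elim 0 b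

theorem graph_apply_eq (x : Fin m → ℝ) (α : Fin m ⊕ Fin n) :
    Sum.elim x (fun i => ∑ j, w i j * x j + b i) α =
      ∑ k, graphCoeff w α k * x k + graphConst b α := by
  cases α <;> simp [graphCoeff, graphConst, Pi.single_apply]

theorem signed_graph_apply_eq (x : Fin m → ℝ) (s s' : ℝ) (α β : Fin m ⊕ Fin n) :
    s * Sum.elim x (fun i => ∑ j, w i j * x j + b i) α +
        s' * Sum.elim x (fun i => ∑ j, w i j * x j + b i) β =
      ∑ k, (s • graphCoeff w α + s' • graphCoeff w β) k * x k +
        (s * graphConst b α + s' * graphConst b β) := by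
  simp only [graph_apply_eq, Pi.add_apply, Pi.smul_apply, smul_eq_mul, add_mul, sum_add_distrib,
    mul_add, mul_sum, mul_assoc]
  ring

theorem signed_pair_le_boxSupport {x : Fin m → ℝ} {y : Fin n → ℝ}
    (hx : ∀ j, xl j ≤ x j ∧ x j ≤ xu j)
    (hmixed : ∀ i j {s s' : ℝ}, (s = 1 ∨ s = -1) → (s' = 1 ∨ s' = -1) →
      s * y i + s' * x j ≤ boxSupport xl xu (s • w i + s' • Pi.single j 1) + s * b i)
    (houtput : ∀ i₁ i₂ {s s' : ℝ}, (s = 1 ∨ s = -1) → (s' = 1 ∨ s' = -1) →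
      s * y i₁ + s' * y i₂ ≤ boxSupport xl xu (s • w i₁ + s' • w i₂) + (s * b i₁ + s' * b i₂))
    {s s' : ℝ} (hs : s = 1 ∨ s = -1) (hs' : s' = 1 ∨ s' = -1) (α β : Fin m ⊕ Fin n) :
    s * Sum.elim x y α + s' * Sum.elim x y β ≤
      boxSupport xl xu (s • graphCoeff w α + s' • graphCoeff w β) +
        (s * graphConst b α + s' * graphConst b β) := by
  rcases α with j₁ | i₁ <;> rcases β with j₂ | i₂
  · have hlin := signed_graph_apply_eq w b x s s' (.inl j₁) (.inl j₂)
    simp only [Sum.elim_inl] at hlin ⊢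
    rw [hlin]
    exact add_le_add_left (sum_mul_le_boxSupport hx _) _
  · simpa [graphCoeff, graphConst, add_comm] using hmixed i₂ j₁ hs' hs
  · simpa [graphCoeff, graphConst] using hmixed i₁ j₂ hs hs'
  · simpa [graphCoeff, graphConst] using houtput i₁ i₂ hs hs'

theorem boxSupport_add_le_of_forall_mem_box (h : ∀ k, xl k ≤ xu k) {s s' cst : ℝ}
    {α β : Fin m ⊕ Fin n}
    (hS : ∀ x : Fin m → ℝ, (∀ j, xl j ≤ x j ∧ x j ≤ xu j) →
      s * Sum.elim x (fun i => ∑ j, w i j * x j + b i) α +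
        s' * Sum.elim x (fun i => ∑ j, w i j * x j + b i) β ≤ cst) :
    boxSupport xl xu (s • graphCoeff w α + s' • graphCoeff w β) +
      (s * graphConst b α + s' * graphConst b β) ≤ cst := by
  have hvertex := hS _ (boxVertex_mem h (s • graphCoeff w α + s' • graphCoeff w β))
  rwa [signed_graph_apply_eq, sum_mul_boxVertex h] at hvertex

end Graph

end Octagon

open Octagon

theorem octagon_tightest_general (m n : ℕ)
    (w : Fin n → Fin m → ℝ) (b : Fin n → ℝ)
    (xl xu : Fin m → ℝ) (hbounds : ∀ j, xl j ≤ xu j)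
    (mlow Mup : Fin n → ℝ)
    (hmlow : ∀ i, mlow i = b i + ∑ j, w i j * (if w i j < 0 then xu j else xl j))
    (hMup : ∀ i, Mup i = b i + ∑ j, w i j * (if w i j < 0 then xl j else xu j))
    (Delta : Fin n → Fin n → ℝ) (delta : Fin n → Fin m → ℝ)
    (hDelta : ∀ i₁ i₂, Delta i₁ i₂ = (b i₁ - b i₂) +
        ∑ j, (w i₁ j - w i₂ j) * (if w i₁ j < w i₂ j then xl j else xu j))
    (hdelta : ∀ i j, delta i j = if w i j ≤ 0 then 0
        else if w i j ≤ 1 then w i j * (xu j - xl j) else xu j - xl j)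
    (Gam Lo : Fin n → Fin n → ℝ) (gam : Fin n → Fin m → ℝ)
    (hGam : ∀ i₁ i₂, Gam i₁ i₂ = (b i₁ + b i₂) +
        ∑ j, (w i₁ j + w i₂ j) * (if w i₁ j + w i₂ j < 0 then xl j else xu j))
    (hLo : ∀ i₁ i₂, Lo i₁ i₂ = (b i₁ + b i₂) +
        ∑ j, (w i₁ j + w i₂ j) * (if w i₁ j + w i₂ j < 0 then xu j else xl j))
    (hgam : ∀ i j, gam i j = if 0 ≤ w i j then 0
        else if (-1 : ℝ) ≤ w i j then -(w i j) * (xu j - xl j) else xu j - xl j) :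
    ∀ (s s' : ℝ), (s = 1 ∨ s = -1) → (s' = 1 ∨ s' = -1) →
    ∀ (a be : Fin m ⊕ Fin n) (cst : ℝ),
      (∀ x : Fin m → ℝ, (∀ j, xl j ≤ x j ∧ x j ≤ xu j) →
        s * Sum.elim x (fun i => ∑ j, w i j * x j + b i) a
          + s' * Sum.elim x (fun i => ∑ j, w i j * x j + b i) be ≤ cst) →
      ∀ (x : Fin m → ℝ) (y : Fin n → ℝ),
        ((∀ j, xl j ≤ x j ∧ x j ≤ xu j) ∧
        (∀ i, mlow i ≤ y i ∧ y i ≤ Mup i) ∧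
        (∀ i₁ i₂, y i₁ - y i₂ ≤ Delta i₁ i₂) ∧
        (∀ i j, mlow i - xu j + delta i j ≤ y i - x j ∧
          y i - x j ≤ Mup i - xl j - delta i j) ∧
        (∀ i₁ i₂, Lo i₁ i₂ ≤ y i₁ + y i₂ ∧ y i₁ + y i₂ ≤ Gam i₁ i₂) ∧
        (∀ i j, mlow i + xl j + gam i j ≤ y i + x j ∧
          y i + x j ≤ Mup i + xu j - gam i j)) →
        s * Sum.elim x y a + s' * Sum.elim x y be ≤ cst := by
  rintro s s' hs hs' α β cst hS x y ⟨hx, -, hΔ, hδ, hΓ, hγ⟩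
  have hMup_eq : ∀ i, Mup i = b i + boxSupport xl xu (w i) := fun i => by
    rw [hMup, ← sum_mul_boxVertex hbounds]; rfl
  have hmlow_eq : ∀ i, mlow i = b i - boxSupport xl xu (-w i) := fun i => by
    rw [hmlow, sum_mul_ite_neg_eq_neg_boxSupport_neg hbounds, sub_eq_add_neg]
  have hDelta_eq : ∀ i₁ i₂, Delta i₁ i₂ = b i₁ - b i₂ + boxSupport xl xu (w i₁ - w i₂) :=
    fun i₁ i₂ => by rw [hDelta, ← sum_mul_boxVertex hbounds]; simp [boxVertex, sub_neg]
  have hGam_eq : ∀ i₁ i₂, Gam i₁ i₂ = b i₁ + b i₂ + boxSupport xl xu (w i₁ + w i₂) :=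
    fun i₁ i₂ => by rw [hGam, ← sum_mul_boxVertex hbounds]; rfl
  have hLo_eq : ∀ i₁ i₂, Lo i₁ i₂ = b i₁ + b i₂ - boxSupport xl xu (-(w i₁ + w i₂)) :=
    fun i₁ i₂ => by
      rw [hLo, sub_eq_add_neg (b i₁ + b i₂), ← sum_mul_ite_neg_eq_neg_boxSupport_neg hbounds]
      rfl
  refine (signed_pair_le_boxSupport w b hx ?_ ?_ hs hs' α β).trans
    (boxSupport_add_le_of_forall_mem_box w b hbounds hS)
  · exact fun i j _ _ => signed_output_add_signed_input_le hbounds (w i) j (hMup_eq i)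
      (hmlow_eq i) (hgam i j) (hdelta i j) (hδ i j) (hγ i j)
  · exact fun i₁ i₂ _ _ => signed_output_add_signed_output_le (hDelta_eq i₁ i₂)
      (hDelta_eq i₂ i₁) (hGam_eq i₁ i₂) (hLo_eq i₁ i₂) (hΔ i₁ i₂) (hΔ i₂ i₁) (hΓ i₁ i₂)

theorem octagon_tightest (m n : ℕ) (hm : 1 ≤ m) (hn : 1 ≤ n)
    (w : Fin n → Fin m → ℝ) (b : Fin n → ℝ)
    (xl xu : Fin m → ℝ) (hbounds : ∀ j, xl j ≤ xu j)
    (mlow Mup : Fin n → ℝ)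
    (hmlow : ∀ i, mlow i = b i + ∑ j, w i j * (if w i j < 0 then xu j else xl j))
    (hMup : ∀ i, Mup i = b i + ∑ j, w i j * (if w i j < 0 then xl j else xu j))
    (Delta : Fin n → Fin n → ℝ) (delta : Fin n → Fin m → ℝ)
    (hDelta : ∀ i₁ i₂, Delta i₁ i₂ = (b i₁ - b i₂) +
        ∑ j, (w i₁ j - w i₂ j) * (if w i₁ j < w i₂ j then xl j else xu j))
    (hdelta : ∀ i j, delta i j = if w i j ≤ 0 then 0
        else if w i j ≤ 1 then w i j * (xu j - xl j) else xu j - xl j)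
    (Gam Lo : Fin n → Fin n → ℝ) (gam : Fin n → Fin m → ℝ)
    (hGam : ∀ i₁ i₂, Gam i₁ i₂ = (b i₁ + b i₂) +
        ∑ j, (w i₁ j + w i₂ j) * (if w i₁ j + w i₂ j < 0 then xl j else xu j))
    (hLo : ∀ i₁ i₂, Lo i₁ i₂ = (b i₁ + b i₂) +
        ∑ j, (w i₁ j + w i₂ j) * (if w i₁ j + w i₂ j < 0 then xu j else xl j))
    (hgam : ∀ i j, gam i j = if 0 ≤ w i j then 0
        else if (-1 : ℝ) ≤ w i j then -(w i j) * (xu j - xl j) else xu j - xl j) :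
    ∀ (s s' : ℝ), (s = 1 ∨ s = -1) → (s' = 1 ∨ s' = -1) →
    ∀ (a be : Fin m ⊕ Fin n) (cst : ℝ),
      (∀ x : Fin m → ℝ, (∀ j, xl j ≤ x j ∧ x j ≤ xu j) →
        s * Sum.elim x (fun i => ∑ j, w i j * x j + b i) a
          + s' * Sum.elim x (fun i => ∑ j, w i j * x j + b i) be ≤ cst) →
      ∀ (x : Fin m → ℝ) (y : Fin n → ℝ),
        ((∀ j, xl j ≤ x j ∧ x j ≤ xu j) ∧
        (∀ i, mlow i ≤ y i ∧ y i ≤ Mup i) ∧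
        (∀ i₁ i₂, y i₁ - y i₂ ≤ Delta i₁ i₂) ∧
        (∀ i j, mlow i - xu j + delta i j ≤ y i - x j ∧
          y i - x j ≤ Mup i - xl j - delta i j) ∧
        (∀ i₁ i₂, Lo i₁ i₂ ≤ y i₁ + y i₂ ∧ y i₁ + y i₂ ≤ Gam i₁ i₂) ∧
        (∀ i j, mlow i + xl j + gam i j ≤ y i + x j ∧
          y i + x j ≤ Mup i + xu j - gam i j)) →
        s * Sum.elim x y a + s' * Sum.elim x y be ≤ cst :=
  octagon_tightest_general m n w b xl xu hbounds mlow Mup hmlow hMup Delta delta hDelta hdelta Gam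
    Lo gam hGam hLo hgam
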